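/- A divisor δ ∈ 𝒟 lies in 𝒫₁ + 𝒫₂ if and only if the following three conditions all hold: (1) Σ_{v∈V} ι(v)·δ(v) = 0 in ℤ/nℤ, where ι assigns to each of z_i^j, x_i^j, y_i^j its index i ∈ ℤ/nℤ; (2) for each 1 ≤ j ≤ t, Σ_{i∈ℤ/nℤ} δ(x_i^j) = Σ_{i∈ℤ/nℤ} δ(y_i^j) (as integers); and (3) for each 1 ≤ j ≤ s, Σ_{i∈ℤ/nℤ} δ(z_i^j) is even. -/

import Mathlib

open scoped BigOperators

section Setup

variable (n s t : ℕ) [NeZero n]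

/-- The vertex set: `Sum.inl (j,i)` is `z_i^j`, `Sum.inr (Sum.inl (j,i))` is `x_i^j`,
`Sum.inr (Sum.inr (j,i))` is `y_i^j`. -/
abbrev Vrt := (Fin s × ZMod n) ⊕ ((Fin t × ZMod n) ⊕ (Fin t × ZMod n))

def zv (j : Fin s) (i : ZMod n) : Vrt n s t := Sum.inl (j, i)
def xv (j : Fin t) (i : ZMod n) : Vrt n s t := Sum.inr (Sum.inl (j, i))
def yv (j : Fin t) (i : ZMod n) : Vrt n s t := Sum.inr (Sum.inr (j, i))

/-- The involution σ₁. -/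
def sig1 : Vrt n s t → Vrt n s t
  | Sum.inl (j, i) => Sum.inl (j, 1 - i)
  | Sum.inr (Sum.inl (j, i)) => Sum.inr (Sum.inr (j, 1 - i))
  | Sum.inr (Sum.inr (j, i)) => Sum.inr (Sum.inl (j, 1 - i))

/-- The involution σ₂. -/
def sig2 : Vrt n s t → Vrt n s t
  | Sum.inl (j, i) => Sum.inl (j, 2 - i)
  | Sum.inr (Sum.inl (j, i)) => Sum.inr (Sum.inr (j, 2 - i))
  | Sum.inr (Sum.inr (j, i)) => Sum.inr (Sum.inl (j, 2 - i))

/-- The rotation ρ = σ₂ ∘ σ₁. -/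
def rho : Vrt n s t → Vrt n s t := sig2 n s t ∘ sig1 n s t

/-- The index of a vertex, an element of ℤ/nℤ. -/
def idx : Vrt n s t → ZMod n
  | Sum.inl (_, i) => i
  | Sum.inr (Sum.inl (_, i)) => i
  | Sum.inr (Sum.inr (_, i)) => i

/-- The group 𝒟 of divisors of total degree zero. -/
def DivD : AddSubgroup (Vrt n s t → ℤ) where
  carrier := {δ | ∑ v, δ v = 0}
  zero_mem' := by simp
  add_mem' := by
    intro a b ha hb
    simp only [Set.mem_setOf_eq, Pi.add_apply, Finset.sum_add_distrib] at *
    simp [ha, hb]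
  neg_mem' := by
    intro a ha
    simp only [Set.mem_setOf_eq, Pi.neg_apply, Finset.sum_neg_distrib] at *
    simp [ha]

/-- 𝒫₁ : degree-zero divisors invariant under σ₁ with even values at σ₁-fixed vertices. -/
def Pgp1 : AddSubgroup (Vrt n s t → ℤ) where
  carrier := {δ | (∑ v, δ v = 0) ∧ (∀ v, δ (sig1 n s t v) = δ v) ∧
      ∀ v, sig1 n s t v = v → Even (δ v)}
  zero_mem' := ⟨by simp, fun _ => rfl, fun _ _ => by simp⟩
  add_mem' := by
    rintro a b ⟨ha0, ha1, ha2⟩ ⟨hb0, hb1, hb2⟩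
    refine ⟨?_, fun v => by simp [ha1 v, hb1 v], fun v hv => (ha2 v hv).add (hb2 v hv)⟩
    simp [Finset.sum_add_distrib, ha0, hb0]
  neg_mem' := by
    rintro a ⟨ha0, ha1, ha2⟩
    exact ⟨by simp [Finset.sum_neg_distrib, ha0], fun v => by simp [ha1 v],
      fun v hv => (ha2 v hv).neg⟩

/-- 𝒫₂ : degree-zero divisors invariant under σ₂ with even values at σ₂-fixed vertices. -/
def Pgp2 : AddSubgroup (Vrt n s t → ℤ) where
  carrier := {δ | (∑ v, δ v = 0) ∧ (∀ v, δ (sig2 n s t v) = δ v) ∧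
      ∀ v, sig2 n s t v = v → Even (δ v)}
  zero_mem' := ⟨by simp, fun _ => rfl, fun _ _ => by simp⟩
  add_mem' := by
    rintro a b ⟨ha0, ha1, ha2⟩ ⟨hb0, hb1, hb2⟩
    refine ⟨?_, fun v => by simp [ha1 v, hb1 v], fun v hv => (ha2 v hv).add (hb2 v hv)⟩
    simp [Finset.sum_add_distrib, ha0, hb0]
  neg_mem' := by
    rintro a ⟨ha0, ha1, ha2⟩
    exact ⟨by simp [Finset.sum_neg_distrib, ha0], fun v => by simp [ha1 v],
      fun v hv => (ha2 v hv).neg⟩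

/-- 𝒫₃ : degree-zero divisors invariant under ρ. -/
def Pgp3 : AddSubgroup (Vrt n s t → ℤ) where
  carrier := {δ | (∑ v, δ v = 0) ∧ ∀ v, δ (rho n s t v) = δ v}
  zero_mem' := ⟨by simp, fun _ => rfl⟩
  add_mem' := by
    rintro a b ⟨ha0, ha1⟩ ⟨hb0, hb1⟩
    exact ⟨by simp [Finset.sum_add_distrib, ha0, hb0], fun v => by simp [ha1 v, hb1 v]⟩
  neg_mem' := by
    rintro a ⟨ha0, ha1⟩
    exact ⟨by simp [Finset.sum_neg_distrib, ha0], fun v => by simp [ha1 v]⟩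

/-- 𝒫₀ : degree-zero divisors constant on each D_n-orbit with even values at the z-vertices
(the pullbacks of degree-zero divisors on G/D_n). -/
def Pgp0 : AddSubgroup (Vrt n s t → ℤ) where
  carrier := {δ | (∑ v, δ v = 0) ∧
      (∀ j i₁ i₂, δ (zv n s t j i₁) = δ (zv n s t j i₂)) ∧
      (∀ j i₁ i₂, δ (xv n s t j i₁) = δ (xv n s t j i₂)) ∧
      (∀ j i₁ i₂, δ (xv n s t j i₁) = δ (yv n s t j i₂)) ∧
      ∀ j i, Even (δ (zv n s t j i))}
  zero_mem' := ⟨by simp, fun _ _ _ => rfl, fun _ _ _ => rfl, fun _ _ _ => rfl,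
    fun _ _ => by simp⟩
  add_mem' := by
    rintro a b ⟨ha0, ha1, ha2, ha3, ha4⟩ ⟨hb0, hb1, hb2, hb3, hb4⟩
    exact ⟨by simp [Finset.sum_add_distrib, ha0, hb0],
      fun j i₁ i₂ => by simp [ha1 j i₁ i₂, hb1 j i₁ i₂],
      fun j i₁ i₂ => by simp [ha2 j i₁ i₂, hb2 j i₁ i₂],
      fun j i₁ i₂ => by simp [ha3 j i₁ i₂, hb3 j i₁ i₂],
      fun j i => (ha4 j i).add (hb4 j i)⟩
  neg_mem' := by
    rintro a ⟨ha0, ha1, ha2, ha3, ha4⟩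
    exact ⟨by simp [Finset.sum_neg_distrib, ha0],
      fun j i₁ i₂ => by simp [ha1 j i₁ i₂],
      fun j i₁ i₂ => by simp [ha2 j i₁ i₂],
      fun j i₁ i₂ => by simp [ha3 j i₁ i₂],
      fun j i => (ha4 j i).neg⟩

/-- σ₁ as a permutation of the vertex set. -/
def sig1e : Equiv.Perm (Vrt n s t) where
  toFun := sig1 n s t
  invFun := sig1 n s t
  left_inv := by rintro (⟨j, i⟩ | ⟨j, i⟩ | ⟨j, i⟩) <;> simp [sig1, sub_sub_cancel]
  right_inv := by rintro (⟨j, i⟩ | ⟨j, i⟩ | ⟨j, i⟩) <;> simp [sig1, sub_sub_cancel]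

/-- σ₂ as a permutation of the vertex set. -/
def sig2e : Equiv.Perm (Vrt n s t) where
  toFun := sig2 n s t
  invFun := sig2 n s t
  left_inv := by rintro (⟨j, i⟩ | ⟨j, i⟩ | ⟨j, i⟩) <;> simp [sig2, sub_sub_cancel]
  right_inv := by rintro (⟨j, i⟩ | ⟨j, i⟩ | ⟨j, i⟩) <;> simp [sig2, sub_sub_cancel]

/-- The dihedral group D_n, realized as the subgroup of permutations of the vertex set
generated by σ₁ and σ₂. -/
def dihedral : Subgroup (Equiv.Perm (Vrt n s t)) :=
  Subgroup.closure {sig1e n s t, sig2e n s t}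

/-- The multigraph with `w u v` edges between `u` and `v`, seen as a simple graph
recording adjacency. -/
def wGraph (w : Vrt n s t → Vrt n s t → ℕ) : SimpleGraph (Vrt n s t) where
  Adj u v := u ≠ v ∧ (w u v ≠ 0 ∨ w v u ≠ 0)
  symm := ⟨by rintro u v ⟨h1, h2⟩; exact ⟨h1.symm, h2.symm⟩⟩
  loopless := ⟨by rintro v ⟨h, _⟩; exact h rfl⟩

/-- The firing divisor `L_v`. -/
def fire (w : Vrt n s t → Vrt n s t → ℕ) (v u : Vrt n s t) : ℤ :=
  if u = v then -(∑ x, (w v x : ℤ)) else (w u v : ℤ)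

/-- The lattice ℒ generated by the firing divisors. -/
def FireLat (w : Vrt n s t → Vrt n s t → ℕ) : AddSubgroup (Vrt n s t → ℤ) :=
  AddSubgroup.closure (Set.range (fire n s t w))

/-- Harmonicity: no nontrivial element of D_n fixes both endpoints of an edge. -/
def Harmonic (w : Vrt n s t → Vrt n s t → ℕ) : Prop :=
  ∀ g ∈ dihedral n s t, g ≠ 1 →
    ∀ u v : Vrt n s t, (wGraph n s t w).Adj u v → ¬(g u = u ∧ g v = v)

/-- The critical group K(G) = 𝒟/ℒ. -/
abbrev KGrp (w : Vrt n s t → Vrt n s t → ℕ) :=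
  DivD n s t ⧸ ((FireLat n s t w).addSubgroupOf (DivD n s t))

/-- The image (𝒫 + ℒ)/ℒ of a subgroup 𝒫 of divisors in the critical group. -/
def Jsub (w : Vrt n s t → Vrt n s t → ℕ) (P : AddSubgroup (Vrt n s t → ℤ)) :
    AddSubgroup (KGrp n s t w) :=
  ((P ⊔ FireLat n s t w).addSubgroupOf (DivD n s t)).map
    (QuotientAddGroup.mk' ((FireLat n s t w).addSubgroupOf (DivD n s t)))

/-- The sum map Φ : J₁ × J₂ × J₃ → K(G). -/
def Phi (w : Vrt n s t → Vrt n s t → ℕ) :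
    (Jsub n s t w (Pgp1 n s t) × Jsub n s t w (Pgp2 n s t) × Jsub n s t w (Pgp3 n s t)) →+
      KGrp n s t w where
  toFun p := (p.1 : KGrp n s t w) + (p.2.1 : KGrp n s t w) + (p.2.2 : KGrp n s t w)
  map_zero' := by simp
  map_add' := by
    intro a b
    simp only [Prod.fst_add, Prod.snd_add, AddSubgroup.coe_add]
    abel

/-- The subgroup ℒ′ of ℒ. -/
def FireLat' (w : Vrt n s t → Vrt n s t → ℕ) : AddSubgroup (Vrt n s t → ℤ) :=
  AddSubgroup.closure
    ({d | ∃ j i, d = fire n s t w (zv n s t j i)} ∪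
     {d | ∃ j i₁ i₂, d = fire n s t w (xv n s t j i₁) + fire n s t w (yv n s t j i₂)} ∪
     {d | ∃ j, d = ∑ i, fire n s t w (xv n s t j i)} ∪
     {d | ∃ j, d = ∑ i, fire n s t w (yv n s t j i)})


/-!
An element of `𝒫_c` is exactly `a + a ∘ σ_c` with `∑ a = 0`: an invariant divisor is split between
each vertex and its mirror image, and halved at fixed vertices. Group the vertices into columns
`z^j`, `x^j`, `y^j` indexed by `ℤ/n`; `σ_c` (`c = 1, 2`) maps a column to its mirror column
(`x^j ↔ y^j`) by `i ↦ c - i`. Hence the column sums of `a + a ∘ σ₁ + b + b ∘ σ₂` have the form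
`w + w ∘ swap`, which is conditions (2) and (3), and since `ι v + ι (σ_c v) = c` its weighted sum
`∑ ι δ` is `∑ a + 2 ∑ b`, which vanishes.

Conversely, if the column sums of `δ` are `w + w ∘ swap`, a point mass at index `0` of each column
matches them, and the remainder, with zero column sums, is `g - g ∘ ρ`, which is
`(-g ∘ σ₂) + (-g ∘ σ₂) ∘ σ₁ + g + g ∘ σ₂`. This writes `δ = a + a ∘ σ₁ + b + b ∘ σ₂`; the degree
then gives `∑ a = -∑ b`, and condition (1) gives `n ∣ ∑ b`. Adding a divisor that is constant on
one column, with sum `∑ b`, to `a` and subtracting it from `b` makes both sums zero.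
-/

open Finset

theorem Function.Bijective.sum_add_comp {V M : Type*} [Fintype V] [AddCommMonoid M] {σ : V → V}
    (hσ : Function.Bijective σ) (a : V → M) : ∑ v, (a + a ∘ σ) v = 2 • ∑ v, a v := by
  simp [sum_add_distrib, hσ.sum_comp, two_smul]

namespace Function.Involutive

variable {V : Type*} {σ : V → V}

theorem exists_eq_add_comp_iff (hσ : Involutive σ) (p : V → ℤ) :
    (∃ a : V → ℤ, p = a + a ∘ σ) ↔ (∀ v, p (σ v) = p v) ∧ ∀ v, σ v = v → Even (p v) := by
  constructor
  · rintro ⟨a, rfl⟩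
    refine ⟨fun v => by simp [hσ v, add_comm], fun v hv => ⟨a v, by simp [hv]⟩⟩
  · rintro ⟨hp, heven⟩
    classical
    -- a well-order picks one point of each two-element orbit to carry the whole value
    let r : V → V → Prop := WellOrderingRel
    refine ⟨fun v => if σ v = v then p v / 2 else if r v (σ v) then p v else 0, funext fun v => ?_⟩
    by_cases hfix : σ v = v
    · obtain ⟨m, hm⟩ := heven v hfix
      simp only [Pi.add_apply, Function.comp_apply, hfix, if_true, hm]
      omega
    · rcases trichotomous_of r v (σ v) with h | h | h
      · simp [hfix, Ne.symm hfix, hσ v, h, asymm h]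
      · exact absurd h.symm hfix
      · simp [hfix, Ne.symm hfix, hσ v, h, asymm h, hp]

variable [Fintype V]

theorem exists_sum_eq_zero_eq_add_comp_iff (hσ : Involutive σ) (p : V → ℤ) :
    (∃ a : V → ℤ, ∑ v, a v = 0 ∧ p = a + a ∘ σ) ↔
      (∑ v, p v = 0) ∧ (∀ v, p (σ v) = p v) ∧ ∀ v, σ v = v → Even (p v) := by
  rw [← hσ.exists_eq_add_comp_iff]
  constructor
  · rintro ⟨a, ha, rfl⟩
    exact ⟨by rw [hσ.bijective.sum_add_comp, ha, smul_zero], a, rfl⟩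
  · rintro ⟨hp, a, rfl⟩
    rw [hσ.bijective.sum_add_comp, two_nsmul] at hp
    exact ⟨a, by omega, rfl⟩

theorem sum_mul_add_comp {R : Type*} [CommRing R] (hσ : Involutive σ) {κ : V → R} {c : R}
    (hκ : ∀ v, κ v + κ (σ v) = c) (a : V → ℤ) :
    ∑ v, κ v * ((a + a ∘ σ) v : R) = c * ∑ v, (a v : R) := by
  have hswap : ∑ v, κ v * (a (σ v) : R) = ∑ v, κ (σ v) * (a v : R) := by
    conv_lhs => rw [← hσ.bijective.sum_comp]
    simp only [hσ _]
  simp only [Pi.add_apply, Function.comp_apply, Int.cast_add, mul_add, sum_add_distrib, hswap]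
  simp only [← sum_add_distrib, ← add_mul, hκ, mul_sum]

end Function.Involutive

theorem ZMod.exists_eq_sub_add_one_of_sum_eq_zero {n : ℕ} [NeZero n] {M : Type*}
    [AddCommGroup M] (h : ZMod n → M) (hh : ∑ i, h i = 0) :
    ∃ g : ZMod n → M, ∀ i, h i = g i - g (i + 1) := by
  classical
  let D : (ZMod n → M) →+ (ZMod n → M) :=
    { toFun := fun g i => g i - g (i + 1)
      map_zero' := funext fun _ => sub_zero 0
      map_add' := fun _ _ => funext fun _ => add_sub_add_comm _ _ _ _ }
  have hstep (i : ZMod n) (x : M) : Pi.single (i + 1) x - Pi.single i x ∈ D.range :=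
    ⟨Pi.single (i + 1) x, funext fun j => by simp [D, Pi.single_apply]⟩
  have hdiff (k : ℕ) (x : M) : Pi.single (k : ZMod n) x - Pi.single 0 x ∈ D.range := by
    induction k with
    | zero => simp
    | succ k ih => simpa using add_mem (hstep k x) ih
  have hdecomp : h = ∑ i, (Pi.single i (h i) - Pi.single 0 (h i)) := by
    ext j
    simp [Finset.sum_apply, Pi.single_apply, hh]
  obtain ⟨g, hg⟩ : h ∈ D.range := hdecomp ▸ sum_mem fun i _ => by
    simpa using hdiff i.val (h i)
  exact ⟨g, fun i => (congrFun hg i).symm⟩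

namespace Vrt

variable {n s t : ℕ}

abbrev Col (s t : ℕ) := Fin s ⊕ (Fin t ⊕ Fin t)

def Col.swap : Col s t → Col s t := Sum.map id Sum.swap

theorem Col.swap_involutive : Function.Involutive (Col.swap : Col s t → Col s t) := by
  rintro (j | j | j) <;> rfl

def col : Vrt n s t → Col s t
  | .inl (j, _) => .inl j
  | .inr (.inl (j, _)) => .inr (.inl j)
  | .inr (.inr (j, _)) => .inr (.inr j)

def vtx : Col s t → ZMod n → Vrt n s t
  | .inl j, i => zv n s t j i
  | .inr (.inl j), i => xv n s t j i
  | .inr (.inr j), i => yv n s t j i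

@[simp]
theorem col_vtx (k : Col s t) (i : ZMod n) : col (vtx k i) = k := by
  rcases k with j | j | j <;> rfl

@[simp]
theorem idx_vtx (k : Col s t) (i : ZMod n) : idx n s t (vtx k i) = i := by
  rcases k with j | j | j <;> rfl

@[simp]
theorem vtx_col_idx (v : Vrt n s t) : vtx (col v) (idx n s t v) = v := by
  rcases v with ⟨j, i⟩ | ⟨j, i⟩ | ⟨j, i⟩ <;> rfl

def equivColProd : Vrt n s t ≃ Col s t × ZMod n where
  toFun v := (col v, idx n s t v)
  invFun p := vtx p.1 p.2
  left_inv := vtx_col_idx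
  right_inv p := by simp

def reflect (c : ZMod n) (v : Vrt n s t) : Vrt n s t :=
  vtx (col v).swap (c - idx n s t v)

@[simp]
theorem col_reflect (c : ZMod n) (v : Vrt n s t) : col (reflect c v) = (col v).swap := by
  simp [reflect]

@[simp]
theorem idx_reflect (c : ZMod n) (v : Vrt n s t) : idx n s t (reflect c v) = c - idx n s t v := by
  simp [reflect]

theorem reflect_involutive (c : ZMod n) : Function.Involutive (reflect c : Vrt n s t → _) :=
  fun v => by simp [reflect, Col.swap_involutive _]

theorem sig1_eq_reflect : sig1 n s t = reflect 1 := by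
  funext v
  rcases v with ⟨j, i⟩ | ⟨j, i⟩ | ⟨j, i⟩ <;> rfl

theorem sig2_eq_reflect : sig2 n s t = reflect 2 := by
  funext v
  rcases v with ⟨j, i⟩ | ⟨j, i⟩ | ⟨j, i⟩ <;> rfl

theorem rho_vtx (k : Col s t) (i : ZMod n) : rho n s t (vtx k i) = vtx k (i + 1) := by
  simp only [rho, Function.comp_apply, sig1_eq_reflect, sig2_eq_reflect, reflect, col_vtx,
    idx_vtx, Col.swap_involutive _]
  congr 1
  ring

variable [NeZero n]

theorem sum_comp_col (κ : Col s t → ℤ) : ∑ v : Vrt n s t, κ (col v) = n * ∑ k, κ k := by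
  rw [← equivColProd.symm.sum_comp, Fintype.sum_prod_type, mul_sum]
  simp [equivColProd]

def colSum (δ : Vrt n s t → ℤ) (k : Col s t) : ℤ :=
  ∑ i, δ (vtx k i)

theorem colSum_add (f g : Vrt n s t → ℤ) : colSum (f + g) = colSum f + colSum g :=
  funext fun _ => sum_add_distrib

theorem colSum_sub (f g : Vrt n s t → ℤ) : colSum (f - g) = colSum f - colSum g :=
  funext fun _ => sum_sub_distrib _ _

theorem colSum_add_comp_reflect (c : ZMod n) (a : Vrt n s t → ℤ) :
    colSum (a + a ∘ reflect c) = colSum a + colSum a ∘ Col.swap := by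
  rw [colSum_add]
  congr 1
  funext k
  simp only [colSum, Function.comp_apply, reflect, col_vtx, idx_vtx]
  exact (Equiv.subLeft c).bijective.sum_comp fun i => a (vtx k.swap i)

theorem exists_colSum_eq_add_comp_swap_iff (δ : Vrt n s t → ℤ) :
    (∃ w : Col s t → ℤ, colSum δ = w + w ∘ Col.swap) ↔
      (∀ j : Fin t, ∑ i, δ (xv n s t j i) = ∑ i, δ (yv n s t j i)) ∧
        ∀ j : Fin s, Even (∑ i, δ (zv n s t j i)) := by
  rw [Col.swap_involutive.exists_eq_add_comp_iff]
  constructor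
  · rintro ⟨hswap, heven⟩
    exact ⟨fun j => (hswap (.inr (.inl j))).symm, fun j => heven (.inl j) rfl⟩
  · rintro ⟨hxy, hz⟩
    refine ⟨?_, ?_⟩
    · rintro (j | j | j)
      exacts [rfl, (hxy j).symm, hxy j]
    · rintro (j | j | j) hk
      · exact hz j
      all_goals cases hk

theorem exists_eq_sub_comp_rho (h : Vrt n s t → ℤ) (hh : colSum h = 0) :
    ∃ g : Vrt n s t → ℤ, h = g - g ∘ rho n s t := by
  choose G hG using fun k =>
    ZMod.exists_eq_sub_add_one_of_sum_eq_zero (fun i => h (vtx k i)) (congrFun hh k)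
  refine ⟨fun v => G (col v) (idx n s t v), funext fun v => ?_⟩
  have hρ : rho n s t v = vtx (col v) (idx n s t v + 1) := by rw [← rho_vtx, vtx_col_idx]
  simpa [hρ] using hG (col v) (idx n s t v)

def reflSum (a b : Vrt n s t → ℤ) : Vrt n s t → ℤ :=
  (a + a ∘ sig1 n s t) + (b + b ∘ sig2 n s t)

theorem mem_Pgp1_sup_Pgp2_iff (δ : Vrt n s t → ℤ) :
    δ ∈ Pgp1 n s t ⊔ Pgp2 n s t ↔
      ∃ a b : Vrt n s t → ℤ, ∑ v, a v = 0 ∧ ∑ v, b v = 0 ∧ δ = reflSum a b := by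
  have h₁ := (sig1_eq_reflect (n := n) (s := s) (t := t) ▸ reflect_involutive 1
    ).exists_sum_eq_zero_eq_add_comp_iff
  have h₂ := (sig2_eq_reflect (n := n) (s := s) (t := t) ▸ reflect_involutive 2
    ).exists_sum_eq_zero_eq_add_comp_iff
  rw [AddSubgroup.mem_sup]
  constructor
  · rintro ⟨p, hp, q, hq, rfl⟩
    obtain ⟨a, ha, rfl⟩ := (h₁ p).2 hp
    obtain ⟨b, hb, rfl⟩ := (h₂ q).2 hq
    exact ⟨a, b, ha, hb, rfl⟩
  · rintro ⟨a, b, ha, hb, rfl⟩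
    exact ⟨_, (h₁ _).1 ⟨a, ha, rfl⟩, _, (h₂ _).1 ⟨b, hb, rfl⟩, rfl⟩

theorem sum_reflSum (a b : Vrt n s t → ℤ) :
    ∑ v, reflSum a b v = 2 • ∑ v, a v + 2 • ∑ v, b v := by
  rw [reflSum, sig1_eq_reflect, sig2_eq_reflect, ← (reflect_involutive 1).bijective.sum_add_comp,
    ← (reflect_involutive 2).bijective.sum_add_comp]
  exact sum_add_distrib

theorem sum_idx_mul_reflSum (a b : Vrt n s t → ℤ) :
    ∑ v, idx n s t v * (reflSum a b v : ZMod n) =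
      ((∑ v, a v : ℤ) : ZMod n) + 2 * ((∑ v, b v : ℤ) : ZMod n) := by
  have hκ (c : ZMod n) (v : Vrt n s t) : idx n s t v + idx n s t (reflect c v) = c := by
    rw [idx_reflect, add_sub_cancel]
  rw [Int.cast_sum, Int.cast_sum, ← one_mul (∑ v, (a v : ZMod n)),
    ← (reflect_involutive 1).sum_mul_add_comp (hκ 1),
    ← (reflect_involutive 2).sum_mul_add_comp (hκ 2), ← sum_add_distrib]
  simp only [reflSum, sig1_eq_reflect, sig2_eq_reflect, Pi.add_apply (a + _), Int.cast_add,
    mul_add]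

theorem colSum_reflSum (a b : Vrt n s t → ℤ) :
    colSum (reflSum a b) = (colSum a + colSum b) + (colSum a + colSum b) ∘ Col.swap := by
  rw [reflSum, colSum_add, sig1_eq_reflect, sig2_eq_reflect, colSum_add_comp_reflect,
    colSum_add_comp_reflect]
  funext k
  simp only [Pi.add_apply, Function.comp_apply]
  ring

theorem exists_eq_reflSum_of_colSum {δ : Vrt n s t → ℤ} {w : Col s t → ℤ}
    (hw : colSum δ = w + w ∘ Col.swap) : ∃ a b : Vrt n s t → ℤ, δ = reflSum a b := by
  classical
  set a₀ : Vrt n s t → ℤ := fun v => if idx n s t v = 0 then w (col v) else 0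
  have ha₀ : colSum a₀ = w := funext fun k => by simp [colSum, a₀]
  obtain ⟨g, hg⟩ := exists_eq_sub_comp_rho (δ - (a₀ + a₀ ∘ sig1 n s t)) (by
    rw [colSum_sub, sig1_eq_reflect, colSum_add_comp_reflect, ha₀, hw, sub_self])
  refine ⟨a₀ - g ∘ sig2 n s t, g, funext fun v => ?_⟩
  have hv := congrFun hg v
  simp only [Pi.sub_apply, Pi.add_apply, Function.comp_apply, rho] at hv
  simp only [reflSum, Pi.sub_apply, Pi.add_apply, Function.comp_apply]
  linarith

theorem exists_sum_eq_zero_reflSum_eq (a b : Vrt n s t → ℤ) (hdeg : ∑ v, reflSum a b v = 0)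
    (hidx : ∑ v, idx n s t v * (reflSum a b v : ZMod n) = 0) :
    ∃ a' b' : Vrt n s t → ℤ, ∑ v, a' v = 0 ∧ ∑ v, b' v = 0 ∧ reflSum a b = reflSum a' b' := by
  have hab : ∑ v, a v = -∑ v, b v := by rw [sum_reflSum, two_nsmul, two_nsmul] at hdeg; omega
  rw [sum_idx_mul_reflSum, hab, Int.cast_neg] at hidx
  obtain ⟨k, hk⟩ := (ZMod.intCast_zmod_eq_zero_iff_dvd _ n).1 (by linear_combination hidx)
  obtain ⟨κ, hκ⟩ : ∃ κ : Col s t → ℤ, ∑ v, b v = n * ∑ k, κ k := by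
    classical
    rcases isEmpty_or_nonempty (Vrt n s t) with _ | ⟨⟨v₀⟩⟩
    · exact ⟨0, by simp⟩
    · exact ⟨Pi.single (col v₀) k, by simp [hk]⟩
  -- `col ∘ σ₁ = col ∘ σ₂`, so moving `κ ∘ col` from `b` to `a` does not change `reflSum a b`
  refine ⟨a + fun v => κ (col v), b - fun v => κ (col v), ?_, ?_, ?_⟩
  · simp only [Pi.add_apply, sum_add_distrib, sum_comp_col, hab, hκ, neg_add_cancel]
  · simp only [Pi.sub_apply, sum_sub_distrib, sum_comp_col, hκ, sub_self]
  · funext v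
    simp only [reflSum, sig1_eq_reflect, sig2_eq_reflect, Pi.add_apply, Pi.sub_apply,
      Function.comp_apply, col_reflect]
    ring

end Vrt

theorem mem_P1_sup_P2_iff_general (n s t : ℕ) [NeZero n]
    (δ : Vrt n s t → ℤ) (hδ : δ ∈ DivD n s t) :
    δ ∈ Pgp1 n s t ⊔ Pgp2 n s t ↔
      ((∑ v, idx n s t v * ((δ v : ℤ) : ZMod n)) = 0 ∧
       (∀ j : Fin t, ∑ i, δ (xv n s t j i) = ∑ i, δ (yv n s t j i)) ∧
       (∀ j : Fin s, Even (∑ i, δ (zv n s t j i)))) := by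
  rw [Vrt.mem_Pgp1_sup_Pgp2_iff, ← Vrt.exists_colSum_eq_add_comp_swap_iff]
  constructor
  · rintro ⟨a, b, ha, hb, rfl⟩
    refine ⟨?_, _, Vrt.colSum_reflSum a b⟩
    rw [Vrt.sum_idx_mul_reflSum, ha, hb]
    simp
  · rintro ⟨hidx, w, hw⟩
    obtain ⟨a, b, rfl⟩ := Vrt.exists_eq_reflSum_of_colSum hw
    exact Vrt.exists_sum_eq_zero_reflSum_eq a b hδ hidx

/-- **Theorem: membership in 𝒫₁ + 𝒫₂.** -/
theorem mem_P1_sup_P2_iff (n s t : ℕ) [NeZero n] (hn : 3 ≤ n)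
    (δ : Vrt n s t → ℤ) (hδ : δ ∈ DivD n s t) :
    δ ∈ Pgp1 n s t ⊔ Pgp2 n s t ↔
      ((∑ v, idx n s t v * ((δ v : ℤ) : ZMod n)) = 0 ∧
       (∀ j : Fin t, ∑ i, δ (xv n s t j i) = ∑ i, δ (yv n s t j i)) ∧
       (∀ j : Fin s, Even (∑ i, δ (zv n s t j i)))) :=
  mem_P1_sup_P2_iff_general n s t δ hδ
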